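/- arXiv:1704.04447 — 2 statements merged into one kernel-verified Lean document; each statement's English description precedes it below -/
import Mathlib

section
/- Let (X,T) be a dynamical system where X is a compact metric space and T : X → X a homeomorphism. If the set of aperiodic points of T is dense in X, then there exists a nowhere dense subset A of X that intersects every periodic orbit of T. -/
/-!
A point `x` with `f^[k] x ≠ x` for `0 < k < M` has an open neighbourhood `V` that no point
leaves and re-enters within fewer than `M` steps. Then `V, f⁻¹ V, …, f^{-(M-1)} V` are
pairwise disjoint, so a periodic orbit with `q` points meets `V` in at most `q / M` points.
Using density of the aperiodic points, put such a `V_j` with `M = 2 ^ (j + 2)` inside the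
`j`-th set of a countable basis. A periodic orbit inside `W = ⋃ j, V_j` would have at most
`∑ j, q / 2 ^ (j + 2) ≤ q / 2` points, so every periodic orbit meets the closed nowhere dense
set `Wᶜ`.
-/

open Function Finset Topology TopologicalSpace

section

variable {X : Type*} {f : X → X}

def NoReturnBefore (f : X → X) (M : ℕ) (V : Set X) : Prop :=
  ∀ k, 0 < k → k < M → ∀ z ∈ V, f^[k] z ∉ V

namespace NoReturnBefore

variable {M : ℕ} {V : Set X}

lemma empty : NoReturnBefore f M (∅ : Set X) := fun _ _ _ _ hz => hz.elim

lemma mono {V' : Set X} (hV : NoReturnBefore f M V) (h : V' ⊆ V) : NoReturnBefore f M V' :=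
  fun k hk hkM z hz hz' => hV k hk hkM z (h hz) (h hz')

lemma injOn_iterate (hf : Injective f) (hV : NoReturnBefore f M V) :
    Set.InjOn (fun p : X × ℕ => f^[p.2] p.1) (V ×ˢ Set.Iio M) := by
  rintro ⟨z, a⟩ ⟨hz, ha⟩ ⟨z', b⟩ ⟨hz', hb⟩ (h : f^[a] z = f^[b] z')
  wlog hab : a ≤ b generalizing z a z' b
  · exact (this z' b hz' hb z a hz ha h.symm (le_of_not_ge hab)).symm
  obtain ⟨k, rfl⟩ := Nat.exists_eq_add_of_le hab
  rw [iterate_add_apply] at h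
  have hzz' : z = f^[k] z' := hf.iterate a h
  obtain rfl : k = 0 := by
    by_contra hk
    exact hV k (Nat.pos_of_ne_zero hk) ((Nat.le_add_left k a).trans_lt hb) z' hz' (hzz' ▸ hz)
  simp [hzz']

lemma mul_card_filter_le (hf : Injective f) (hV : NoReturnBefore f M V) [DecidablePred (· ∈ V)]
    {s : Finset X} (hs : Set.MapsTo f s s) : M * #{z ∈ s | z ∈ V} ≤ #s := by
  have hmaps : Set.MapsTo (fun p : X × ℕ => f^[p.2] p.1)
      ({z ∈ s | z ∈ V} ×ˢ range M : Finset _) s := fun p hp =>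
    hs.iterate p.2 (mem_filter.1 (mem_product.1 hp).1).1
  have hinj : Set.InjOn (fun p : X × ℕ => f^[p.2] p.1) ({z ∈ s | z ∈ V} ×ˢ range M : Finset _) :=
    (hV.injOn_iterate hf).mono fun p hp => by
      rw [mem_coe, mem_product, mem_filter, mem_range] at hp
      exact ⟨hp.1.2, hp.2⟩
  simpa [card_product, mul_comm] using card_le_card_of_injOn _ hmaps hinj

end NoReturnBefore

theorem not_subset_iUnion_of_noReturnBefore (hf : Injective f) {s : Finset X} (hne : s.Nonempty)
    (hs : Set.MapsTo f s s) {V : ℕ → Set X} (hV : ∀ j, NoReturnBefore f (2 ^ (j + 2)) (V j)) :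
    ¬ (s : Set X) ⊆ ⋃ j, V j := by
  classical
  intro hsub
  set q := #s
  set c : ℕ → ℕ := fun j => #{z ∈ s | z ∈ V j}
  have hc : ∀ j, 2 ^ (j + 2) * c j ≤ q := fun j => (hV j).mul_card_filter_le hf hs
  have hcover : s ⊆ (range q).biUnion fun j => {z ∈ s | z ∈ V j} := by
    intro z hz
    obtain ⟨j, hj⟩ := Set.mem_iUnion.1 (hsub hz)
    have hzj : z ∈ {z ∈ s | z ∈ V j} := mem_filter.2 ⟨hz, hj⟩
    have hjq : j < q := calc
      j < 2 ^ (j + 2) := Nat.lt_two_pow_self.trans (Nat.pow_lt_pow_right (by norm_num) (by omega))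
      _ ≤ 2 ^ (j + 2) * c j := Nat.le_mul_of_pos_right _ (card_pos.2 ⟨z, hzj⟩)
      _ ≤ q := hc j
    exact mem_biUnion.2 ⟨j, mem_range.2 hjq, hzj⟩
  have hq : (0 : ℝ) < q := by exact_mod_cast card_pos.2 hne
  have : (q : ℝ) ≤ q / 2 := calc
    (q : ℝ) ≤ ∑ j ∈ range q, (c j : ℝ) := by
      exact_mod_cast (card_le_card hcover).trans card_biUnion_le
    _ ≤ ∑ j ∈ range q, q / 4 * (1 / 2 : ℝ) ^ j := by
      refine sum_le_sum fun j _ => ?_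
      have : (2 : ℝ) ^ (j + 2) * c j ≤ q := by exact_mod_cast hc j
      rw [show (q : ℝ) / 4 * (1 / 2) ^ j = q / 2 ^ (j + 2) by
        rw [one_div, inv_pow, pow_add]; ring,
        le_div_iff₀ (by positivity)]
      linarith
    _ = q / 4 * ∑ j ∈ range q, (1 / 2 : ℝ) ^ j := (mul_sum _ _ _).symm
    _ ≤ q / 4 * 2 := by gcongr; exact sum_geometric_two_le q
    _ = q / 2 := by ring
  linarith

theorem mapsTo_image_range_iterate [DecidableEq X] {n : ℕ} (hn : 0 < n) {x : X}
    (hx : f^[n] x = x) :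
    Set.MapsTo f ((range n).image (f^[·] x) : Finset X)
      ((range n).image (f^[·] x) : Finset X) := by
  rintro _ hy
  simp only [coe_image, coe_range, Set.mem_image, Set.mem_Iio] at hy ⊢
  obtain ⟨k, -, rfl⟩ := hy
  exact ⟨(k + 1) % n, Nat.mod_lt _ hn, by
    rw [IsPeriodicPt.iterate_mod_apply hx, iterate_succ_apply']⟩

variable [TopologicalSpace X] [T2Space X]

theorem exists_isOpen_mem_noReturnBefore (hf : Continuous f) {x : X} {M : ℕ}
    (hx : ∀ k, 0 < k → k < M → f^[k] x ≠ x) :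
    ∃ V, IsOpen V ∧ x ∈ V ∧ NoReturnBefore f M V := by
  have hsep : ∀ k, 0 < k → k < M → ∃ V, IsOpen V ∧ x ∈ V ∧ ∀ z ∈ V, f^[k] z ∉ V := by
    intro k hk hkM
    obtain ⟨u, v, hu, hv, hxu, hxv, huv⟩ := t2_separation (hx k hk hkM)
    exact ⟨v ∩ f^[k] ⁻¹' u, hv.inter (hu.preimage (hf.iterate k)), ⟨hxv, hxu⟩,
      fun z hz hz' => Set.disjoint_left.1 huv hz.2 hz'.1⟩
  choose! V hVo hxV hV using hsep
  refine ⟨⋂ k ∈ Finset.Ioo 0 M, V k, isOpen_biInter_finset fun k hk => ?_,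
    Set.mem_iInter₂.2 fun k hk => ?_, fun k hk hkM z hz hz' => ?_⟩
  · exact hVo k (mem_Ioo.1 hk).1 (mem_Ioo.1 hk).2
  · exact hxV k (mem_Ioo.1 hk).1 (mem_Ioo.1 hk).2
  · simp only [Set.mem_iInter₂, mem_Ioo] at hz hz'
    exact hV k hk hkM z (hz k ⟨hk, hkM⟩) (hz' k ⟨hk, hkM⟩)

theorem exists_isOpen_dense_forall_periodic_exists_iterate_notMem [SecondCountableTopology X]
    (hf : Continuous f) (hinj : Injective f)
    (hdense : Dense {x : X | ∀ n : ℕ, 1 ≤ n → f^[n] x ≠ x}) :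
    ∃ W : Set X, IsOpen W ∧ Dense W ∧
      ∀ x : X, (∃ n : ℕ, 1 ≤ n ∧ f^[n] x = x) → ∃ k : ℕ, f^[k] x ∉ W := by
  obtain ⟨b, hb⟩ := exists_seq_basis X
  have hV : ∀ j, ∃ V ⊆ b j, IsOpen V ∧ ((b j).Nonempty → V.Nonempty) ∧
      NoReturnBefore f (2 ^ (j + 2)) V := by
    intro j
    have hbj := hb.isOpen (Set.mem_range_self j)
    by_cases hne : (b j).Nonempty
    · obtain ⟨x, hxb, hx⟩ := hdense.inter_open_nonempty _ hbj hne
      obtain ⟨V, hVo, hxV, hV⟩ := exists_isOpen_mem_noReturnBefore hf fun k hk _ => hx k hk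
      exact ⟨b j ∩ V, Set.inter_subset_left, hbj.inter hVo, fun _ => ⟨x, hxb, hxV⟩,
        hV.mono Set.inter_subset_right⟩
    · exact ⟨∅, Set.empty_subset _, isOpen_empty, fun h => (hne h).elim, NoReturnBefore.empty⟩
  choose V hVb hVo hVne hV using hV
  refine ⟨⋃ j, V j, isOpen_iUnion hVo, ?_, ?_⟩
  · rw [hb.dense_iff]
    rintro _ ⟨j, rfl⟩ hne
    obtain ⟨x, hx⟩ := hVne j hne
    exact ⟨x, hVb j hx, Set.mem_iUnion.2 ⟨j, hx⟩⟩
  · classical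
    rintro x ⟨n, hn, hx⟩
    by_contra! horbit
    refine not_subset_iUnion_of_noReturnBefore hinj ⟨x, mem_image_of_mem _ (mem_range.2 hn)⟩
      (mapsTo_image_range_iterate hn hx) hV ?_
    simp only [coe_image, coe_range, Set.image_subset_iff]
    exact fun k _ => horbit k

end

/-- If the set of aperiodic points of a homeomorphism `T` of a compact metric space is dense,
then there exists a nowhere dense set `A` intersecting every periodic orbit. -/
theorem stmt0 {X : Type*} [MetricSpace X] [CompactSpace X] (T : X ≃ₜ X)
    (hdense : Dense {x : X | ∀ n : ℕ, 1 ≤ n → (⇑T)^[n] x ≠ x}) :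
    ∃ A : Set X, IsNowhereDense A ∧
      ∀ x : X, (∃ n : ℕ, 1 ≤ n ∧ (⇑T)^[n] x = x) → ∃ k : ℕ, (⇑T)^[k] x ∈ A := by
  obtain ⟨W, hWo, hWd, hW⟩ :=
    exists_isOpen_dense_forall_periodic_exists_iterate_notMem T.continuous T.injective hdense
  refine ⟨Wᶜ, (isClosed_isNowhereDense_iff_compl.2 ?_).2, hW⟩
  rw [compl_compl]
  exact ⟨hWo, hWd⟩
end

section
/- Let X be a compact metric space, and T₁, T₂ homeomorphisms of X such that: T₁ = T₂ outside a closed set K; T₁^n(K) = T₂^n(K) for all n ≥ 0; the sets T₁^n(K), n ≥ 0, are pairwise disjoint; and diam(T₁^n(K)) → 0 as n → ∞. Define h : X → X by h(x) = T₂^{n_x}(T₁^{-n_x}(x)) if x ∈ T₁^{n_x}(K) for the (unique) n_x ≥ 0, and h(x) = x otherwise. Then h is a homeomorphism of X conjugating T₁ to T₂, i.e. h ∘ T₁ = T₂ ∘ h. -/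
open Topology

/-- Two homeomorphisms agreeing outside a closed set `K`, whose forward images of `K` agree,
are pairwise disjoint and shrink in diameter, are conjugate via the map `h` defined by
`h(x) = T₂^n(T₁^{-n} x)` on `T₁^n(K)` and the identity elsewhere. -/
theorem stmt7 {X : Type*} [MetricSpace X] [CompactSpace X] (T₁ T₂ : X ≃ₜ X) (K : Set X)
    (hK : IsClosed K)
    (heq : ∀ x : X, x ∉ K → T₁ x = T₂ x)
    (hiter : ∀ n : ℕ, (⇑T₁)^[n] '' K = (⇑T₂)^[n] '' K)
    (hdisj : ∀ m n : ℕ, m ≠ n → Disjoint ((⇑T₁)^[m] '' K) ((⇑T₁)^[n] '' K))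
    (hdiam : Filter.Tendsto (fun n : ℕ => Metric.diam ((⇑T₁)^[n] '' K))
      Filter.atTop (𝓝 0))
    (h : X → X)
    (hUdef : ∀ n : ℕ, ∀ x ∈ (⇑T₁)^[n] '' K, h x = (⇑T₂)^[n] ((⇑T₁.symm)^[n] x))
    (hid : ∀ x : X, x ∉ (⋃ n : ℕ, (⇑T₁)^[n] '' K) → h x = x) :
    IsHomeomorph h ∧ h ∘ ⇑T₁ = ⇑T₂ ∘ h := by
  classical
  set U : ℕ → Set X := fun n => (⇑T₁)^[n] '' K with hU
  -- basic facts
  have hli1 : ∀ n : ℕ, Function.LeftInverse (⇑T₁.symm)^[n] (⇑T₁)^[n] :=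
    fun n => Function.LeftInverse.iterate T₁.symm_apply_apply n
  have hli2 : ∀ n : ℕ, Function.LeftInverse (⇑T₂.symm)^[n] (⇑T₂)^[n] :=
    fun n => Function.LeftInverse.iterate T₂.symm_apply_apply n
  have hUcomp : ∀ n, IsCompact (U n) := fun n =>
    (hK.isCompact).image (T₁.continuous.iterate n)
  have hUclosed : ∀ n, IsClosed (U n) := fun n => (hUcomp n).isClosed
  have hU0 : U 0 = K := by simp [hU]
  have huniq : ∀ {m n : ℕ} {x : X}, x ∈ U m → x ∈ U n → m = n := by
    intro m n x hm hn
    by_contra hmn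
    exact (hdisj m n hmn).ne_of_mem hm hn rfl
  -- h maps each U n into itself, via the formula
  have hval : ∀ n (k : X), k ∈ K → h ((⇑T₁)^[n] k) = (⇑T₂)^[n] k := by
    intro n k hk
    rw [hUdef n _ (Set.mem_image_of_mem _ hk), hli1 n k]
  have himg : ∀ n x, x ∈ U n → h x ∈ U n := by
    intro n x hx
    obtain ⟨k, hk, rfl⟩ := hx
    rw [hval n k hk]
    show (⇑T₂)^[n] k ∈ (⇑T₁)^[n] '' K
    rw [hiter n]
    exact Set.mem_image_of_mem _ hk
  -- boundary lemma: on K ∩ closure Kᶜ, iterates of T₁ and T₂ agree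
  have hKbd : ∀ n (k : X), k ∈ K → k ∈ closure Kᶜ → (⇑T₂)^[n] k = (⇑T₁)^[n] k := by
    intro n k hk hkc
    induction n with
    | zero => rfl
    | succ n ih =>
      rw [Function.iterate_succ_apply', Function.iterate_succ_apply', ih]
      cases n with
      | zero =>
        have hEq : Set.EqOn (⇑T₁) (⇑T₂) (closure Kᶜ) :=
          Set.EqOn.closure (fun z hz => heq z hz) T₁.continuous T₂.continuous
        exact (hEq hkc).symm
      | succ m =>
        have hmem : (⇑T₁)^[m+1] k ∈ U (m+1) := Set.mem_image_of_mem _ hk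
        have hnotK : (⇑T₁)^[m+1] k ∉ K := by
          intro hcon
          have : (⇑T₁)^[m+1] k ∈ U 0 := by rw [hU0]; exact hcon
          exact Nat.succ_ne_zero m (huniq hmem this)
        exact (heq _ hnotK).symm
  -- fixed points of h on the boundary of U n
  have hfix : ∀ n (x : X), x ∈ U n → x ∉ interior (U n) → h x = x := by
    intro n x hx hint
    obtain ⟨k, hk, rfl⟩ := hx
    have hxcl : (⇑T₁)^[n] k ∈ closure ((U n)ᶜ) := by
      rw [closure_compl]; exact hint
    have hkcl : k ∈ closure Kᶜ := by
      have h1 : (⇑T₁.symm)^[n] '' ((U n)ᶜ) = Kᶜ := by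
        have hbij : Function.Bijective ((⇑T₁)^[n]) :=
          Function.Bijective.iterate T₁.bijective n
        rw [hU]
        rw [← Set.image_compl_eq hbij, (hli1 n).image_image]
      have h2 : (⇑T₁.symm)^[n] ((⇑T₁)^[n] k) ∈ closure ((⇑T₁.symm)^[n] '' ((U n)ᶜ)) :=
        image_closure_subset_closure_image (T₁.symm.continuous.iterate n)
          (Set.mem_image_of_mem _ hxcl)
      rw [h1] at h2
      rwa [hli1 n k] at h2
    rw [hval n k hk]
    exact hKbd n k hk hkcl
  -- the inverse map
  set g : X → X := fun x =>
    if hx : ∃ n, x ∈ U n then (⇑T₁)^[hx.choose] ((⇑T₂.symm)^[hx.choose] x) else x with hgdef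
  have hg_mem : ∀ n x, x ∈ U n → g x = (⇑T₁)^[n] ((⇑T₂.symm)^[n] x) := by
    intro n x hx
    have hex : ∃ m, x ∈ U m := ⟨n, hx⟩
    have : hex.choose = n := huniq hex.choose_spec hx
    simp only [hgdef, dif_pos hex, this]
  have hg_id : ∀ x : X, (¬ ∃ n, x ∈ U n) → g x = x := by
    intro x hx; simp only [hgdef, dif_neg hx]
  have hgval : ∀ n (k : X), k ∈ K → g ((⇑T₂)^[n] k) = (⇑T₁)^[n] k := by
    intro n k hk
    have hmem : (⇑T₂)^[n] k ∈ U n := by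
      show (⇑T₂)^[n] k ∈ (⇑T₁)^[n] '' K
      rw [hiter n]; exact Set.mem_image_of_mem _ hk
    rw [hg_mem n _ hmem, hli2 n k]
  have hgh : Function.LeftInverse g h := by
    intro x
    by_cases hx : ∃ n, x ∈ U n
    · obtain ⟨n, hn⟩ := hx
      obtain ⟨k, hk, rfl⟩ := hn
      rw [hval n k hk, hgval n k hk]
    · have hxU : x ∉ ⋃ n : ℕ, (⇑T₁)^[n] '' K := by
        intro hcon
        obtain ⟨s, ⟨n, rfl⟩, hmem⟩ := hcon
        exact hx ⟨n, hmem⟩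
      rw [hid x hxU]
      exact hg_id x hx
  have hhg : Function.RightInverse g h := by
    intro x
    by_cases hx : ∃ n, x ∈ U n
    · obtain ⟨n, hn⟩ := hx
      have hn' : x ∈ (⇑T₂)^[n] '' K := by rw [← hiter n]; exact hn
      obtain ⟨k, hk, rfl⟩ := hn'
      rw [hgval n k hk, hval n k hk]
    · have hxU : x ∉ ⋃ n : ℕ, (⇑T₁)^[n] '' K := by
        intro hcon
        obtain ⟨s, ⟨n, rfl⟩, hmem⟩ := hcon
        exact hx ⟨n, hmem⟩
      rw [hg_id x hx, hid x hxU]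
  -- continuity of h
  have hcont : Continuous h := by
    rw [Metric.continuous_iff]
    intro x ε hε
    obtain ⟨N, hN⟩ : ∃ N, ∀ m ≥ N, Metric.diam (U m) < ε / 4 := by
      have hev := hdiam.eventually (gt_mem_nhds (by positivity : (0:ℝ) < ε / 4))
      rw [Filter.eventually_atTop] at hev
      obtain ⟨N, hN⟩ := hev
      exact ⟨N, fun m hm => hN m hm⟩
    by_cases hx : ∃ n, x ∈ U n
    · obtain ⟨n, hn⟩ := hx
      -- continuity of the local formula
      have hφ : Continuous fun y => (⇑T₂)^[n] ((⇑T₁.symm)^[n] y) :=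
        (T₂.continuous.iterate n).comp (T₁.symm.continuous.iterate n)
      obtain ⟨δ₁, hδ₁pos, hδ₁⟩ := Metric.continuousAt_iff.mp (hφ.continuousAt (x := x)) ε hε
      by_cases hint : x ∈ interior (U n)
      · obtain ⟨δ₀, hδ₀pos, hδ₀⟩ := Metric.isOpen_iff.mp isOpen_interior x hint
        refine ⟨min δ₁ δ₀, lt_min hδ₁pos hδ₀pos, fun y hy => ?_⟩
        have hyU : y ∈ U n := interior_subset (hδ₀ (lt_of_lt_of_le hy (min_le_right _ _)))
        rw [hUdef n y hyU, hUdef n x hn]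
        exact hδ₁ (lt_of_lt_of_le hy (min_le_left _ _))
      · have hhx : h x = x := hfix n x hn hint
        -- separate from the small-index pieces other than n
        set C : Set X := ⋃ m ∈ Finset.range N \ {n}, U m with hC
        have hCclosed : IsClosed C :=
          Set.Finite.isClosed_biUnion (Finset.range N \ {n}).finite_toSet
            (fun m _ => hUclosed m)
        have hxC : x ∉ C := by
          intro hcon
          simp only [hC, Set.mem_iUnion] at hcon
          obtain ⟨m, hm, hmem⟩ := hcon
          have := huniq hmem hn
          simp only [Finset.mem_sdiff, Finset.mem_singleton] at hm
          exact hm.2 this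
        obtain ⟨δ₂, hδ₂pos, hδ₂⟩ := Metric.isOpen_iff.mp hCclosed.isOpen_compl x hxC
        refine ⟨min (min δ₁ δ₂) (ε / 4), lt_min (lt_min hδ₁pos hδ₂pos) (by positivity),
          fun y hy => ?_⟩
        by_cases hyU : ∃ m, y ∈ U m
        · obtain ⟨m, hm⟩ := hyU
          by_cases hmn : m = n
          · subst hmn
            rw [hUdef m y hm, hUdef m x hn]
            exact hδ₁ (lt_of_lt_of_le hy (le_trans (min_le_left _ _) (min_le_left _ _)))
          · have hmN : N ≤ m := by
              by_contra hlt
              push_neg at hlt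
              have hyC : y ∈ C := by
                simp only [hC, Set.mem_iUnion]
                exact ⟨m, by simp [Finset.mem_range.mpr hlt, hmn], hm⟩
              have : y ∈ Metric.ball x δ₂ :=
                lt_of_lt_of_le hy (le_trans (min_le_left _ _) (min_le_right _ _))
              exact hδ₂ this hyC
            have hd1 : dist (h y) y ≤ Metric.diam (U m) :=
              Metric.dist_le_diam_of_mem (hUcomp m).isBounded (himg m y hm) hm
            calc dist (h y) (h x) ≤ dist (h y) y + dist y (h x) := dist_triangle _ _ _
              _ = dist (h y) y + dist y x := by rw [hhx]
              _ < ε / 4 + ε / 4 := by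
                  have := hN m hmN
                  have hyx : dist y x < ε / 4 := lt_of_lt_of_le hy (min_le_right _ _)
                  linarith
              _ < ε := by linarith
        · have hyUnion : y ∉ ⋃ n : ℕ, (⇑T₁)^[n] '' K := by
            intro hcon
            obtain ⟨s, ⟨m, rfl⟩, hmem⟩ := hcon
            exact hyU ⟨m, hmem⟩
          rw [hid y hyUnion, hhx]
          exact lt_of_lt_of_le hy (le_trans (min_le_right _ _) (by linarith))
    · have hxUnion : x ∉ ⋃ n : ℕ, (⇑T₁)^[n] '' K := by
        intro hcon
        obtain ⟨s, ⟨m, rfl⟩, hmem⟩ := hcon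
        exact hx ⟨m, hmem⟩
      have hhx : h x = x := hid x hxUnion
      set C : Set X := ⋃ m ∈ Finset.range N, U m with hC
      have hCclosed : IsClosed C :=
        Set.Finite.isClosed_biUnion (Finset.range N).finite_toSet (fun m _ => hUclosed m)
      have hxC : x ∉ C := by
        intro hcon
        simp only [hC, Set.mem_iUnion] at hcon
        obtain ⟨m, _, hmem⟩ := hcon
        exact hx ⟨m, hmem⟩
      obtain ⟨δ₂, hδ₂pos, hδ₂⟩ := Metric.isOpen_iff.mp hCclosed.isOpen_compl x hxC
      refine ⟨min δ₂ (ε / 4), lt_min hδ₂pos (by positivity), fun y hy => ?_⟩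
      by_cases hyU : ∃ m, y ∈ U m
      · obtain ⟨m, hm⟩ := hyU
        have hmN : N ≤ m := by
          by_contra hlt
          push_neg at hlt
          have hyC : y ∈ C := by
            simp only [hC, Set.mem_iUnion]
            exact ⟨m, Finset.mem_range.mpr hlt, hm⟩
          have : y ∈ Metric.ball x δ₂ := lt_of_lt_of_le hy (min_le_left _ _)
          exact hδ₂ this hyC
        have hd1 : dist (h y) y ≤ Metric.diam (U m) :=
          Metric.dist_le_diam_of_mem (hUcomp m).isBounded (himg m y hm) hm
        calc dist (h y) (h x) ≤ dist (h y) y + dist y (h x) := dist_triangle _ _ _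
          _ = dist (h y) y + dist y x := by rw [hhx]
          _ < ε / 4 + ε / 4 := by
              have := hN m hmN
              have hyx : dist y x < ε / 4 := lt_of_lt_of_le hy (min_le_right _ _)
              linarith
          _ < ε := by linarith
      · have hyUnion : y ∉ ⋃ n : ℕ, (⇑T₁)^[n] '' K := by
          intro hcon
          obtain ⟨s, ⟨m, rfl⟩, hmem⟩ := hcon
          exact hyU ⟨m, hmem⟩
        rw [hid y hyUnion, hhx]
        exact lt_of_lt_of_le hy (le_trans (min_le_right _ _) (by linarith))
  -- assemble the homeomorphism
  have hhomeo : IsHomeomorph h := by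
    let e : X ≃ X := ⟨h, g, hgh, hhg⟩
    have hce : Continuous ⇑e := hcont
    exact (hce.homeoOfEquivCompactToT2 (f := e)).isHomeomorph
  refine ⟨hhomeo, ?_⟩
  funext x
  simp only [Function.comp_apply]
  by_cases hx : ∃ n, x ∈ U n
  · obtain ⟨n, hn⟩ := hx
    obtain ⟨k, hk, rfl⟩ := hn
    rw [hval n k hk, ← Function.iterate_succ_apply' (⇑T₁) n k, hval (n + 1) k hk,
      Function.iterate_succ_apply' (⇑T₂) n k]
  · have hxUnion : x ∉ ⋃ n : ℕ, (⇑T₁)^[n] '' K := by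
      intro hcon
      obtain ⟨s, ⟨m, rfl⟩, hmem⟩ := hcon
      exact hx ⟨m, hmem⟩
    have hxK : x ∉ K := fun hcon => hx ⟨0, by rw [hU0]; exact hcon⟩
    rw [hid x hxUnion]
    by_cases hTx : ∃ m, T₁ x ∈ U m
    · obtain ⟨m, hm⟩ := hTx
      cases m with
      | zero =>
        have hTxK : T₁ x ∈ K := by rw [← hU0]; exact hm
        have : h (T₁ x) = T₁ x := hval 0 (T₁ x) hTxK
        rw [this, heq x hxK]
      | succ j =>
        exfalso
        obtain ⟨k, hk, hkx⟩ := hm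
        rw [Function.iterate_succ_apply'] at hkx
        have : x = (⇑T₁)^[j] k := T₁.injective hkx.symm ▸ rfl
        have hxj : x ∈ U j := by
          have := T₁.injective hkx
          rw [← this]
          exact Set.mem_image_of_mem _ hk
        exact hx ⟨j, hxj⟩
    · have hTxUnion : T₁ x ∉ ⋃ n : ℕ, (⇑T₁)^[n] '' K := by
        intro hcon
        obtain ⟨s, ⟨m, rfl⟩, hmem⟩ := hcon
        exact hTx ⟨m, hmem⟩
      rw [hid _ hTxUnion, heq x hxK]
end
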